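/- A graph G is (P5, House, Bull)-free if and only if for every vertex v of G, the Seidel complement G * v is (P5, House, Bull)-free. -/

import Mathlib

namespace SimpleGraph

variable {V W : Type*}

/-- Seidel complement of `G` at vertex `v`. -/
def seidel (G : SimpleGraph V) (v : V) : SimpleGraph V where
  Adj x y := Xor' (G.Adj x y)
    ((G.Adj v x ∧ ¬ G.Adj v y ∧ y ≠ v) ∨ (G.Adj v y ∧ ¬ G.Adj v x ∧ x ≠ v))
  symm := by
    constructor
    intro x y h
    unfold Xor' Xor at h ⊢
    have hc := G.adj_comm x y
    tauto
  loopless := by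
    constructor
    intro x h
    unfold Xor' Xor at h
    simp only [G.irrefl] at h
    tauto

/-- A module (homogeneous set in the weak sense) of a graph. -/
def IsModule (G : SimpleGraph V) (M : Set V) : Prop :=
  ∀ x ∉ M, (∀ y ∈ M, G.Adj x y) ∨ (∀ y ∈ M, ¬ G.Adj x y)

/-- A graph is prime w.r.t. modular decomposition. -/
def IsPrime (G : SimpleGraph V) [Fintype V] : Prop :=
  3 ≤ Fintype.card V ∧
    ∀ M : Set V, G.IsModule M → M = ∅ ∨ (∃ x, M = {x}) ∨ M = Set.univ

/-- `G` has no induced subgraph isomorphic to `H`. -/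
def IndFree (G : SimpleGraph V) (H : SimpleGraph W) : Prop :=
  IsEmpty (H ↪g G)

/-- The bull: triangle 0,1,2 with pendant vertices 3 (at 0) and 4 (at 1). -/
def bull : SimpleGraph (Fin 5) :=
  SimpleGraph.fromRel (fun x y =>
    (x, y) ∈ [((0 : Fin 5), (1 : Fin 5)), (1, 2), (0, 2), (0, 3), (1, 4)])

/-- The house: complement of the path on 5 vertices. -/
def house : SimpleGraph (Fin 5) := (pathGraph 5)ᶜ

/-- `G` is (P5, House, Bull)-free. -/
def PHBFree (G : SimpleGraph V) : Prop :=
  G.IndFree (pathGraph 5) ∧ G.IndFree house ∧ G.IndFree bull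

/-- The half graph: `b i` adjacent to `w j` iff `i + j ≤ m + 1` (1-based). -/
def halfGraph (m : ℕ) : SimpleGraph (Fin m ⊕ Fin m) :=
  SimpleGraph.fromRel (fun x y =>
    match x, y with
    | Sum.inl i, Sum.inr j => i.val + j.val < m
    | _, _ => False)

/-- A buoy partition of a set of vertices. -/
def IsBuoy (G : SimpleGraph V) (A : Fin 5 → Set V) : Prop :=
  (∀ i, (A i).Nonempty) ∧
  (∀ i j, i ≠ j → Disjoint (A i) (A j)) ∧
  (∀ i, ∀ x ∈ A i, ∀ y ∈ A (i + 1), G.Adj x y) ∧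
  (∀ i j, i ≠ j → j ≠ i + 1 → i ≠ j + 1 → ∀ x ∈ A i, ∀ y ∈ A j, ¬ G.Adj x y) ∧
  (∀ B : Fin 5 → Set V,
    ((∀ i j, i ≠ j → Disjoint (B i) (B j)) ∧
     (∀ i, ∀ x ∈ B i, ∀ y ∈ B (i + 1), G.Adj x y) ∧
     (∀ i j, i ≠ j → j ≠ i + 1 → i ≠ j + 1 → ∀ x ∈ B i, ∀ y ∈ B j, ¬ G.Adj x y) ∧
     (∀ i, A i ⊆ B i)) → B = A)

end SimpleGraph

/-!
If `G * v` contains an induced copy of `F ∈ {P5, house, bull}` on a vertex set `S`, then, as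
`G = (G * v) * v`, the graph `G` contains `(G * v)[S ∪ {v}] * v`. When `v ∈ S` this is a Seidel
complement `F * k`; when `v ∉ S` it is `F` with one new vertex attached to some `T ⊆ S`,
Seidel-complemented at the new vertex. A finite search shows that each of these graphs on five or
six vertices again contains an induced P5, house or bull. The converse holds because Seidel
complementation is an involution.
-/

namespace SimpleGraph

variable {V W : Type*}

section Seidel

variable {G : SimpleGraph V} {H : SimpleGraph W}

instance [DecidableEq V] [DecidableRel G.Adj] (v : V) : DecidableRel (G.seidel v).Adj :=
  fun _ _ => inferInstanceAs (Decidable (Xor _ _))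

theorem seidel_adj {v x y : V} : (G.seidel v).Adj x y ↔ Xor (G.Adj x y)
    ((G.Adj v x ∧ ¬ G.Adj v y ∧ y ≠ v) ∨ (G.Adj v y ∧ ¬ G.Adj v x ∧ x ≠ v)) :=
  Iff.rfl

theorem seidel_adj_self {v x : V} : (G.seidel v).Adj v x ↔ G.Adj v x := by
  simp [seidel_adj, Xor]

theorem seidel_seidel (G : SimpleGraph V) (v : V) : (G.seidel v).seidel v = G := by
  ext x y
  rw [seidel_adj, seidel_adj_self, seidel_adj_self, seidel_adj]
  unfold Xor
  tauto

def Embedding.seidel (f : H ↪g G) {w : W} {v : V} (hwv : f w = v) : H.seidel w ↪g G.seidel v where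
  toEmbedding := f.toEmbedding
  map_rel_iff' {a b} := by
    subst hwv
    simp only [seidel_adj, RelEmbedding.coe_toEmbedding, f.map_adj_iff, f.injective.ne_iff]

end Seidel

section AddVertex

variable {G : SimpleGraph V} {H : SimpleGraph W}

def addVertex (H : SimpleGraph W) (T : Set W) : SimpleGraph (Option W) where
  Adj
    | some x, some y => H.Adj x y
    | none, some y => y ∈ T
    | some x, none => x ∈ T
    | none, none => False
  symm := ⟨by rintro (_ | x) (_ | y) h <;> first | exact h | exact h.symm⟩
  loopless := ⟨by rintro (_ | x) h <;> first | exact h | exact H.loopless.irrefl x h⟩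

instance [DecidableRel H.Adj] (T : Set W) [DecidablePred (· ∈ T)] :
    DecidableRel (H.addVertex T).Adj
  | some x, some y => inferInstanceAs (Decidable (H.Adj x y))
  | none, some y => inferInstanceAs (Decidable (y ∈ T))
  | some x, none => inferInstanceAs (Decidable (x ∈ T))
  | none, none => inferInstanceAs (Decidable False)

def Embedding.addVertex (f : H ↪g G) (v : V) (hv : ∀ w, f w ≠ v) :
    H.addVertex (f ⁻¹' G.neighborSet v) ↪g G where
  toFun o := o.elim v f
  inj' := by
    rintro (_ | a) (_ | b) h
    · rfl
    · exact absurd h.symm (hv b)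
    · exact absurd h (hv a)
    · exact congrArg some (f.injective h)
  map_rel_iff' {a b} := by
    rcases a with _ | a <;> rcases b with _ | b
    · exact iff_of_false (G.loopless.irrefl v) id
    · rfl
    · exact G.adj_comm _ _
    · exact f.map_adj_iff

@[simp] theorem Embedding.addVertex_none (f : H ↪g G) (v : V) (hv : ∀ w, f w ≠ v) :
    f.addVertex v hv none = v :=
  rfl

end AddVertex

section Search

variable (H : SimpleGraph W) (G : SimpleGraph V)

def IsPartialEmbedding (m : List (W × V)) : Prop :=
  ∀ p ∈ m, ∀ q ∈ m, (p.1 = q.1 ↔ p.2 = q.2) ∧ (H.Adj p.1 q.1 ↔ G.Adj p.2 q.2)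

/-- The conditions checked at each step only prune the search; soundness rests on the check at
the leaves. -/
def CanExtend : List W → List (W × V) → Prop
  | [], m => IsPartialEmbedding H G m
  | a :: as, m =>
    ∃ x, (∀ p ∈ m, p.2 ≠ x ∧ (H.Adj p.1 a ↔ G.Adj p.2 x)) ∧ CanExtend as ((a, x) :: m)

instance [DecidableEq W] [DecidableEq V] [DecidableRel H.Adj] [DecidableRel G.Adj]
    (m : List (W × V)) : Decidable (IsPartialEmbedding H G m) := by
  unfold IsPartialEmbedding; infer_instance

instance CanExtend.instDecidable [Fintype V] [DecidableEq W] [DecidableEq V] [DecidableRel H.Adj]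
    [DecidableRel G.Adj] : (as : List W) → (m : List (W × V)) → Decidable (CanExtend H G as m)
  | [], m => inferInstanceAs (Decidable (IsPartialEmbedding H G m))
  | a :: as, m =>
    have : ∀ x, Decidable (CanExtend H G as ((a, x) :: m)) :=
      fun _ => CanExtend.instDecidable as _
    inferInstanceAs (Decidable (∃ _, _ ∧ _))

variable {H G}

theorem CanExtend.exists_isPartialEmbedding :
    ∀ {as : List W} {m : List (W × V)}, CanExtend H G as m →
      ∃ m', IsPartialEmbedding H G m' ∧ m ⊆ m' ∧ ∀ a ∈ as, ∃ x, (a, x) ∈ m'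
  | [], m, h => ⟨m, h, List.Subset.refl m, by simp⟩
  | a :: as, m, ⟨x, _, h⟩ => by
    obtain ⟨m', hm', hsub, hcov⟩ := h.exists_isPartialEmbedding
    refine ⟨m', hm', List.Subset.trans (List.subset_cons_self _ _) hsub, ?_⟩
    rintro b (_ | ⟨_, hb⟩)
    · exact ⟨x, hsub List.mem_cons_self⟩
    · exact hcov b hb

theorem IsPartialEmbedding.nonempty_embedding {m : List (W × V)} (hm : IsPartialEmbedding H G m)
    (hcov : ∀ w, ∃ x, (w, x) ∈ m) : Nonempty (H ↪g G) := by
  choose g hg using hcov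
  refine ⟨⟨⟨g, fun a b hab => ((hm _ (hg a) _ (hg b)).1.2 hab)⟩, ?_⟩⟩
  intro a b
  exact (hm _ (hg a) _ (hg b)).2.symm

theorem CanExtend.nonempty_embedding {as : List W} (h : CanExtend H G as [])
    (has : ∀ w, w ∈ as) : Nonempty (H ↪g G) := by
  obtain ⟨m, hm, -, hcov⟩ := h.exists_isPartialEmbedding
  exact hm.nonempty_embedding fun w => hcov w (has w)

end Search

section PHB

variable {G : SimpleGraph V} {H : SimpleGraph W}

instance {n : ℕ} : DecidableRel (pathGraph n).Adj :=
  fun _ _ => decidable_of_iff _ pathGraph_adj.symm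

instance : DecidableRel house.Adj := inferInstanceAs (DecidableRel (pathGraph 5)ᶜ.Adj)

instance : DecidableRel bull.Adj := inferInstanceAs (DecidableRel (fromRel _).Adj)

def phbGraphs : Set (SimpleGraph (Fin 5)) := {pathGraph 5, house, bull}

theorem not_phbFree_iff : ¬ G.PHBFree ↔ ∃ F ∈ phbGraphs, Nonempty (F ↪g G) := by
  simp only [PHBFree, IndFree, phbGraphs, Set.mem_insert_iff, Set.mem_singleton_iff,
    exists_eq_or_imp, exists_eq_left, ← not_isEmpty_iff, not_and_or]

theorem not_phbFree_of_embedding (e : H ↪g G) (hH : ¬ H.PHBFree) : ¬ G.PHBFree := by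
  obtain ⟨F, hF, ⟨f⟩⟩ := not_phbFree_iff.1 hH
  exact not_phbFree_iff.2 ⟨F, hF, ⟨f.trans e⟩⟩

theorem phbFree_of_isEmpty [IsEmpty V] (G : SimpleGraph V) : G.PHBFree :=
  ⟨⟨fun f => isEmptyElim (f 0)⟩, ⟨fun f => isEmptyElim (f 0)⟩, ⟨fun f => isEmptyElim (f 0)⟩⟩

theorem not_phbFree_of_canExtend
    (h : CanExtend (pathGraph 5) G (List.finRange 5) [] ∨ CanExtend house G (List.finRange 5) [] ∨
      CanExtend bull G (List.finRange 5) []) : ¬ G.PHBFree := by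
  refine not_phbFree_iff.2 ?_
  rcases h with h | h | h
  · exact ⟨_, Or.inl rfl, h.nonempty_embedding List.mem_finRange⟩
  · exact ⟨_, Or.inr (Or.inl rfl), h.nonempty_embedding List.mem_finRange⟩
  · exact ⟨_, Or.inr (Or.inr rfl), h.nonempty_embedding List.mem_finRange⟩

theorem not_phbFree_seidel {F : SimpleGraph (Fin 5)} (hF : F ∈ phbGraphs) (k : Fin 5) :
    ¬ (F.seidel k).PHBFree := by
  apply not_phbFree_of_canExtend
  revert k
  rcases hF with rfl | rfl | rfl <;> decide +kernel

theorem not_phbFree_seidel_addVertex {F : SimpleGraph (Fin 5)} (hF : F ∈ phbGraphs)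
    (T : Set (Fin 5)) : ¬ ((F.addVertex T).seidel none).PHBFree := by
  rw [← T.toFinite.coe_toFinset]
  apply not_phbFree_of_canExtend
  generalize T.toFinite.toFinset = S
  revert S
  rcases hF with rfl | rfl | rfl <;> decide +kernel

end PHB

theorem PHBFree.seidel {G : SimpleGraph V} (hG : G.PHBFree) (v : V) : (G.seidel v).PHBFree := by
  by_contra h
  obtain ⟨F, hF, ⟨f⟩⟩ := not_phbFree_iff.1 h
  by_cases hv : ∃ k, f k = v
  · obtain ⟨k, hk⟩ := hv
    have e := f.seidel hk
    rw [seidel_seidel] at e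
    exact not_phbFree_of_embedding e (not_phbFree_seidel hF k) hG
  · have e := (f.addVertex v (not_exists.1 hv)).seidel (f.addVertex_none v _)
    rw [seidel_seidel] at e
    exact not_phbFree_of_embedding e (not_phbFree_seidel_addVertex hF _) hG

end SimpleGraph

open SimpleGraph in
theorem stmt4 {V : Type*} (G : SimpleGraph V) :
    G.PHBFree ↔ ∀ v : V, (G.seidel v).PHBFree := by
  refine ⟨fun hG v => hG.seidel v, fun h => ?_⟩
  rcases isEmpty_or_nonempty V with hV | ⟨⟨v⟩⟩
  · exact phbFree_of_isEmpty G
  · simpa only [seidel_seidel] using (h v).seidel v
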